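/- Under the hypotheses of the previous statement, if additionally every p_i(μ) for i ≤ n has degree strictly less than n as a polynomial in μ, then ∏_{j=0}^{n-1}((e-n+1)/2+j) = 0, and hence (assuming e ≡ n-1 mod 2) e ∈ {n-1, n-3, …, -n+1}; in particular e - n < 0. -/

import Mathlib

/-!
Since `Uᵐ P ≡ 1 mod zⁿ⁺¹`, the series `P = U⁻ᵐ (Uᵐ P)` agrees with `(1 - μz)⁻ᵐ` up to `zⁿ`, so
`pₙ = choose(-m, n) (-μ)ⁿ`. The degree bound kills its `μⁿ`-coefficient, hence `choose(-m, n) = 0`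
in `ℤ`; as `n! choose(r, n) = r (r - 1) ⋯ (r - n + 1)`, this means `m = -j` for some `j < n`.
-/

open PowerSeries Finset

namespace PowerSeries

lemma coeff_mul_eq_left_of_coeff_eq_coeff_one {A : Type*} [Semiring A] {n : ℕ} (F Q : A⟦X⟧)
    (hQ : ∀ i ≤ n, coeff i Q = coeff i (1 : A⟦X⟧)) :
    coeff n (F * Q) = coeff n F := by
  conv_rhs => rw [← mul_one F]
  rw [coeff_mul, coeff_mul]
  exact sum_congr rfl fun ij hij => by
    rw [hQ ij.2 (Finset.HasAntidiagonal.antidiagonal.snd_le hij)]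

variable {A : Type*} [CommRing A]

lemma val_zpow_eq_rescale_binomialSeries (a : A) (U : A⟦X⟧ˣ)
    (hU : (U : A⟦X⟧) = 1 + C a * X) (r : ℤ) :
    ((U ^ r : A⟦X⟧ˣ) : A⟦X⟧) = rescale a (binomialSeries A r) := by
  have hone : rescale a (binomialSeries A (1 : ℤ)) = U := by
    simpa [hU] using congrArg (rescale a) (binomialSeries_nat (R := ℤ) (A := A) 1)
  have hinv : ((U⁻¹ : A⟦X⟧ˣ) : A⟦X⟧) = rescale a (binomialSeries A (-1 : ℤ)) :=
    Units.inv_eq_of_mul_eq_one_right (by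
      rw [← hone, ← map_mul, ← binomialSeries_add, add_neg_cancel, binomialSeries_zero, map_one])
  induction r using Int.induction_on with
  | zero => simp
  | succ k ih => rw [zpow_add_one, Units.val_mul, ih, ← hone, ← map_mul, ← binomialSeries_add]
  | pred k ih =>
    rw [zpow_sub_one, Units.val_mul, ih, hinv, ← map_mul, ← binomialSeries_add, sub_eq_add_neg]

lemma coeff_val_zpow_of_eq_one_add_C_mul_X (a : A) (U : A⟦X⟧ˣ)
    (hU : (U : A⟦X⟧) = 1 + C a * X) (r : ℤ) (k : ℕ) :
    coeff k ((U ^ r : A⟦X⟧ˣ) : A⟦X⟧) = Ring.choose r k • a ^ k := by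
  rw [val_zpow_eq_rescale_binomialSeries a U hU, coeff_rescale, binomialSeries_coeff,
    zsmul_one, zsmul_eq_mul, mul_comm]

end PowerSeries

lemma Int.exists_eq_natCast_lt_of_ringChoose_eq_zero {r : ℤ} {n : ℕ} (h : Ring.choose r n = 0) :
    ∃ j < n, r = j := by
  have hprod := Ring.descPochhammer_eq_factorial_smul_choose r n
  rw [h, smul_zero, ← Polynomial.eval_eq_smeval, descPochhammer_eval_eq_prod_range,
    prod_eq_zero_iff] at hprod
  obtain ⟨j, hj, hrj⟩ := hprod
  exact ⟨j, mem_range.1 hj, sub_eq_zero.1 hrj⟩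

theorem bennequin_key_step_general (n : ℕ) (e m : ℤ)
    (hm : 2 * m = e - (n : ℤ) + 1)
    (U : (PowerSeries (Polynomial ℚ))ˣ)
    (hU : (U : PowerSeries (Polynomial ℚ)) = 1 - PowerSeries.C (Polynomial.X : Polynomial ℚ) * PowerSeries.X)
    (p : ℕ → Polynomial ℚ)
    (P : PowerSeries (Polynomial ℚ)) (hP : P = PowerSeries.mk p)
    (h0 : PowerSeries.coeff 0 ((↑(U ^ m) : PowerSeries (Polynomial ℚ)) * P) = 1)
    (hvan : ∀ i, 1 ≤ i → i ≤ n →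
      PowerSeries.coeff i ((↑(U ^ m) : PowerSeries (Polynomial ℚ)) * P) = 0)
    (hdeg : ∀ i ≤ n, (p i).degree < (n : ℕ)) :
    (∏ j ∈ Finset.range n, ((m : ℚ) + j)) = 0 ∧
      (-(n : ℤ) + 1 ≤ e ∧ e ≤ (n : ℤ) - 1) ∧ e - (n : ℤ) < 0 := by
  have hU' : (U : PowerSeries (Polynomial ℚ)) = 1 + C (-Polynomial.X) * X := by
    rw [hU, map_neg, neg_mul, sub_eq_add_neg]
  have hQ : ∀ i ≤ n, coeff i ((↑(U ^ m) : PowerSeries (Polynomial ℚ)) * P) = coeff i 1 := by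
    rintro (_ | i) hi
    · simpa using h0
    · rw [hvan (i + 1) (by omega) hi, coeff_one, if_neg (by omega)]
  have hpn : p n = Ring.choose (-m) n • (-Polynomial.X) ^ n := by
    calc p n = coeff n ((↑(U ^ (-m)) : PowerSeries (Polynomial ℚ)) * (↑(U ^ m) * P)) := by
          rw [← mul_assoc, ← Units.val_mul, ← zpow_add, neg_add_cancel, zpow_zero, Units.val_one,
            one_mul, hP, coeff_mk]
      _ = Ring.choose (-m) n • (-Polynomial.X) ^ n := by
          rw [coeff_mul_eq_left_of_coeff_eq_coeff_one _ _ hQ,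
            coeff_val_zpow_of_eq_one_add_C_mul_X _ U hU']
  have hchoose : Ring.choose (-m) n = 0 := by
    have hcoeff := Polynomial.coeff_eq_zero_of_degree_lt (hdeg n le_rfl)
    rw [hpn, Polynomial.coeff_smul, neg_pow, ← Polynomial.C_1, ← Polynomial.C_neg,
      ← Polynomial.C_pow, Polynomial.coeff_C_mul_X_pow, if_pos rfl, zsmul_eq_mul] at hcoeff
    simpa using hcoeff
  obtain ⟨j, hj, hmj⟩ := Int.exists_eq_natCast_lt_of_ringChoose_eq_zero hchoose
  refine ⟨prod_eq_zero (mem_range.2 hj) ?_, by omega, by omega⟩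
  rw [show m = -j by omega]
  push_cast
  ring

/-- Key algebraic step: if moreover each `pᵢ` (`i ≤ n`) has `μ`-degree `< n`, then
`∏_{j<n}(m+j) = 0`, hence `e ∈ {n-1, n-3, …, -n+1}`; in particular `e - n < 0`. -/
theorem bennequin_key_step (n : ℕ) (hn : 1 ≤ n) (e m : ℤ)
    (hm : 2 * m = e - (n : ℤ) + 1)
    (U : (PowerSeries (Polynomial ℚ))ˣ)
    (hU : (U : PowerSeries (Polynomial ℚ)) = 1 - PowerSeries.C (Polynomial.X : Polynomial ℚ) * PowerSeries.X)
    (p : ℕ → Polynomial ℚ)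
    (P : PowerSeries (Polynomial ℚ)) (hP : P = PowerSeries.mk p)
    (h0 : PowerSeries.coeff 0 ((↑(U ^ m) : PowerSeries (Polynomial ℚ)) * P) = 1)
    (hvan : ∀ i, 1 ≤ i → i ≤ n →
      PowerSeries.coeff i ((↑(U ^ m) : PowerSeries (Polynomial ℚ)) * P) = 0)
    (hdeg : ∀ i ≤ n, (p i).degree < (n : ℕ)) :
    (∏ j ∈ Finset.range n, ((m : ℚ) + j)) = 0 ∧
      (-(n : ℤ) + 1 ≤ e ∧ e ≤ (n : ℤ) - 1) ∧ e - (n : ℤ) < 0 :=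
  bennequin_key_step_general n e m hm U hU p P hP h0 hvan hdeg
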